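/- Correctness of the one-level FL query procedure: let κ ≥ 3, let (y_0,...,y_{n-1}) be a 1-difference sequence, and let (x,y) be a nontrivial query, i.e., 0 ≤ x < n and y_x < y ≤ max_i y_i. Set t = y - y_x. If t < κ, then FL(x,y) equals the ladder entry L_x[y] (the precomputed value FL(x,y)). Otherwise, let p = ⌊t/κ⌋₂, let x̂ be the largest integer in {1,...,x} with π(x̂) = p if one exists and x̂ = 0 otherwise, and let x̄ = Valley(FL(x̂, y_{x̂} + (κ-2)p)) with the conventions Jump[0] = 0 and Valley(n) = n-1. Then y_{x̄} < y ≤ y_{x̄} + height(L_{x̄}) and FL(x̄, y) = FL(x, y), where height(L_{x̄}) = min{max{κ-1, κ'(Weight(x̄)-1)-2}, y_max - y_{x̄}} for 0 < x̄ < n-1 and height(L_{x̄}) = y_max - y_{x̄} for x̄ ∈ {0, n-1}, with κ' = ⌈(2κ+2)/(κ-2)⌉. -/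
import Mathlib


/-- `y₀,…,y_{n-1}` is a 1-difference sequence: `|y i - y (i-1)| ≤ 1` for `i = 1,…,n-1`. -/
def OneDiff (n : ℕ) (y : ℕ → ℤ) : Prop :=
  ∀ i : ℕ, 1 ≤ i → i < n → |y i - y (i - 1)| ≤ 1

/-- `FL n y x Y = min({i | x ≤ i ≤ n-1, y i ≥ Y} ∪ {n})`. -/
noncomputable def FL (n : ℕ) (y : ℕ → ℤ) (x : ℕ) (Y : ℤ) : ℕ :=
  sInf ({i | x ≤ i ∧ i < n ∧ Y ≤ y i} ∪ {n})

/-- `(a,b)` is down-left reachable from `(x,Y)`: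
`0 ≤ a ≤ x`, `y a ≤ b ≤ Y`, and `y i < Y` for all `a ≤ i < x`. -/
def DLR (n : ℕ) (y : ℕ → ℤ) (x : ℕ) (Y : ℤ) (a : ℕ) (b : ℤ) : Prop :=
  a ≤ x ∧ y a ≤ b ∧ b ≤ Y ∧ ∀ i : ℕ, a ≤ i → i < x → y i < Y

/-- `v` is the valley of `(x,Y)`: `(v, y v)` is down-left reachable from `(x,Y)`,
`y v` is the minimal second coordinate over all down-left reachable points, and
`v` is the largest index realizing that minimum. -/
def IsValley (n : ℕ) (y : ℕ → ℤ) (x : ℕ) (Y : ℤ) (v : ℕ) : Prop :=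
  DLR n y x Y v (y v) ∧ (∀ a b, DLR n y x Y a b → y v ≤ b) ∧
    (∀ a, DLR n y x Y a (y a) → y a = y v → a ≤ v)

/-- `Weight a = |{x ∈ {a,…,n-1} : Valley(x, y x) = a}|`. -/
noncomputable def Weight (n : ℕ) (y : ℕ → ℤ) (a : ℕ) : ℕ :=
  Set.ncard {x | a ≤ x ∧ x < n ∧ IsValley n y x (y x) a}

/-- `pi2 k` is the largest power of 2 dividing `k ≥ 1`. -/
def pi2 (k : ℕ) : ℕ := 2 ^ (padicValNat 2 k)

lemma ydiff (n : ℕ) (y : ℕ → ℤ) (h1 : OneDiff n y) :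
    ∀ j, j < n → ∀ i, i ≤ j → |y j - y i| ≤ (j : ℤ) - i := by
  intro j
  induction j with
  | zero => intro _ i hi; interval_cases i; simp
  | succ k ih =>
    intro hk i hi
    rcases Nat.eq_or_lt_of_le hi with h | h
    · subst h; simp
    · have hik : i ≤ k := Nat.lt_succ_iff.mp h
      have h2 := ih (by omega) i hik
      have h3 := h1 (k+1) (by omega) hk
      simp only [Nat.add_sub_cancel] at h3
      have := abs_sub_abs_le_abs_sub (y (k+1) - y i) (y (k+1) - y k)
      have habs : |y (k+1) - y i| ≤ |y (k+1) - y k| + |y k - y i| := by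
        calc |y (k+1) - y i| = |(y (k+1) - y k) + (y k - y i)| := by ring_nf
          _ ≤ _ := abs_add_le _ _
      push_cast
      have : |y (k+1) - y i| ≤ 1 + ((k : ℤ) - i) := by linarith
      linarith

lemma ydiff_le (n : ℕ) (y : ℕ → ℤ) (h1 : OneDiff n y) {i j : ℕ} (hij : i ≤ j) (hj : j < n) :
    y j ≤ y i + ((j : ℤ) - i) ∧ y i ≤ y j + ((j : ℤ) - i) := by
  have := ydiff n y h1 j hj i hij
  rw [abs_le] at this
  constructor <;> linarith [this.1, this.2]

lemma FL_le (n : ℕ) (y : ℕ → ℤ) (x : ℕ) (Y : ℤ) : FL n y x Y ≤ n :=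
  Nat.sInf_le (Or.inr rfl)

lemma FL_mem (n : ℕ) (y : ℕ → ℤ) (x : ℕ) (Y : ℤ) (h : FL n y x Y < n) :
    x ≤ FL n y x Y ∧ FL n y x Y < n ∧ Y ≤ y (FL n y x Y) := by
  have hne : ({i | x ≤ i ∧ i < n ∧ Y ≤ y i} ∪ {n} : Set ℕ).Nonempty := ⟨n, Or.inr rfl⟩
  have := Nat.sInf_mem hne
  rcases this with h' | h'
  · exact h'
  · simp only [Set.mem_singleton_iff] at h'
    rw [FL] at h; omega

lemma FL_min (n : ℕ) (y : ℕ → ℤ) (x : ℕ) (Y : ℤ) {i : ℕ} (hxi : x ≤ i)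
    (hi : i < FL n y x Y) : y i < Y := by
  by_contra hc
  push_neg at hc
  have hin : i < n := lt_of_lt_of_le hi (FL_le n y x Y)
  have : FL n y x Y ≤ i := Nat.sInf_le (Or.inl ⟨hxi, hin, hc⟩)
  omega

lemma FL_congr (n : ℕ) (y : ℕ → ℤ) (x x' : ℕ) (Y : ℤ) (hxx : x ≤ x')
    (h : ∀ i, x ≤ i → i < x' → y i < Y) : FL n y x Y = FL n y x' Y := by
  unfold FL
  congr 1
  ext i
  simp only [Set.mem_union, Set.mem_setOf_eq, Set.mem_singleton_iff]
  constructor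
  · rintro (⟨h1, h2, h3⟩ | h1)
    · left
      refine ⟨?_, h2, h3⟩
      by_contra hc
      push_neg at hc
      exact absurd h3 (not_le.mpr (h i h1 hc))
    · exact Or.inr h1
  · rintro (⟨h1, h2, h3⟩ | h1)
    · exact Or.inl ⟨le_trans hxx h1, h2, h3⟩
    · exact Or.inr h1

lemma FL_eq_n (n : ℕ) (y : ℕ → ℤ) (x : ℕ) (Y : ℤ)
    (h : ∀ i, x ≤ i → i < n → y i < Y) : FL n y x Y = n := by
  unfold FL
  have : ({i | x ≤ i ∧ i < n ∧ Y ≤ y i} ∪ {n} : Set ℕ) = {n} := by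
    ext i
    simp only [Set.mem_union, Set.mem_setOf_eq, Set.mem_singleton_iff]
    constructor
    · rintro (⟨h1, h2, h3⟩ | h1)
      · exact absurd h3 (not_le.mpr (h i h1 h2))
      · exact h1
    · exact fun h => Or.inr h
  rw [this, csInf_singleton]

lemma pi2_eq_pow_iff (k e : ℕ) (hk : k ≠ 0) : pi2 k = 2 ^ e ↔ 2 ^ e ∣ k ∧ ¬ 2 ^ (e+1) ∣ k := by
  have hinj : ∀ a b : ℕ, (2:ℕ) ^ a = 2 ^ b → a = b := fun a b h =>
    Nat.pow_right_injective (le_refl 2) h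
  unfold pi2
  constructor
  · intro h
    have he : padicValNat 2 k = e := hinj _ _ h
    refine ⟨?_, ?_⟩
    · rw [← he]; exact pow_padicValNat_dvd
    · rw [← he]; exact pow_succ_padicValNat_not_dvd hk
  · rintro ⟨h1, h2⟩
    have hle : e ≤ padicValNat 2 k := (padicValNat_dvd_iff_le hk).mp h1
    have hge : padicValNat 2 k ≤ e := by
      by_contra hc
      push_neg at hc
      exact h2 ((padicValNat_dvd_iff_le hk).mpr hc)
    rw [le_antisymm hge hle]

lemma pi2_pow (e : ℕ) : pi2 (2 ^ e) = 2 ^ e := by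
  unfold pi2
  rw [padicValNat.prime_pow]

lemma pi2_add (k e : ℕ) (hk : k ≠ 0) (h : pi2 k = 2 ^ e) : pi2 (k + 2 ^ (e+1)) = 2 ^ e := by
  rw [pi2_eq_pow_iff _ _ hk] at h
  rw [pi2_eq_pow_iff _ _ (by positivity)]
  constructor
  · exact Nat.dvd_add h.1 (pow_dvd_pow 2 (Nat.le_succ e))
  · intro hc
    have : (2:ℕ) ^ (e+1) ∣ k := (Nat.dvd_add_iff_left (dvd_refl _)).mpr hc
    exact h.2 this

lemma weight_ge (n : ℕ) (y : ℕ → ℤ) (h1 : OneDiff n y) (xb z : ℕ) (hz : z < n)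
    (hval : IsValley n y z (y z) xb) :
    y z - y xb + 1 ≤ (Weight n y xb : ℤ) := by
  obtain ⟨⟨hxbz, -, hyxbz, hwinz⟩, hmin, hright⟩ := hval
  set S : Set ℕ := {x | xb ≤ x ∧ x < n ∧ IsValley n y x (y x) xb} with hS
  have hSfin : S.Finite := (Set.finite_Iio n).subset fun a ha => ha.2.1
  set g : ℤ → ℕ := fun h => FL n y xb h with hg
  have key : ∀ h : ℤ, y xb ≤ h → h ≤ y z → g h ∈ S ∧ y (g h) = h := by
    intro h hh1 hh2
    have hghz : g h ≤ z := Nat.sInf_le (Or.inl ⟨hxbz, hz, hh2⟩)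
    have hgm := FL_mem n y xb h (lt_of_le_of_lt hghz hz)
    obtain ⟨hg1, hg2, hg3⟩ := hgm
    simp only [show FL n y xb h = g h from rfl] at hg1 hg2 hg3
    have hwin : ∀ i, xb ≤ i → i < g h → y i < h := fun i a b => FL_min n y xb h a b
    have hygh : y (g h) = h := by
      rcases Nat.eq_or_lt_of_le hg1 with he | hlt
      · have : h ≤ y xb := by rw [he]; exact hg3
        rw [← he]; omega
      · have h4 : y (g h - 1) < h := hwin _ (by omega) (by omega)
        have h5 := h1 (g h) (by omega) hg2
        rw [abs_le] at h5
        omega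
    refine ⟨⟨hg1, hg2, ?_⟩, hygh⟩
    constructor
    · exact ⟨hg1, le_refl _, by omega, fun i hi hi2 => by
        have := hwin i hi hi2; omega⟩
    constructor
    · rintro a b ⟨ha1, ha2, ha3, ha4⟩
      have : y xb ≤ y a := by
        refine hmin a (y a) ⟨le_trans ha1 hghz, le_refl _, by omega, ?_⟩
        intro i hi hi2
        by_cases hig : i < g h
        · have := ha4 i hi hig; omega
        · exact hwinz i (by omega) hi2
      omega
    · rintro a ⟨ha1, -, ha3, ha4⟩ heq
      refine hright a ⟨le_trans ha1 hghz, le_refl _, by omega, ?_⟩ heq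
      intro i hi hi2
      by_cases hig : i < g h
      · have := ha4 i hi hig; omega
      · exact hwinz i (by omega) hi2
  have hinj : Set.InjOn g ↑(Finset.Icc (y xb) (y z)) := by
    intro a ha b hb hab
    simp only [Finset.coe_Icc, Set.mem_Icc] at ha hb
    have h1 := (key a ha.1 ha.2).2
    have h2 := (key b hb.1 hb.2).2
    rw [← h1, ← h2, hab]
  have hsub : ↑((Finset.Icc (y xb) (y z)).image g) ⊆ S := by
    intro a ha
    simp only [Finset.coe_image, Set.mem_image, Finset.coe_Icc, Set.mem_Icc] at ha
    obtain ⟨h, ⟨hh1, hh2⟩, rfl⟩ := ha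
    exact (key h hh1 hh2).1
  have hcard : ((Finset.Icc (y xb) (y z)).image g).card = (y z + 1 - y xb).toNat := by
    rw [Finset.card_image_of_injOn hinj, Int.card_Icc]
  have hle : ((Finset.Icc (y xb) (y z)).image g).card ≤ Weight n y xb := by
    rw [← Set.ncard_coe_finset]
    exact Set.ncard_le_ncard hsub hSfin
  rw [hcard] at hle
  omega

/-- Correctness of the one-level FL query procedure for a nontrivial query `(x, Y)`
about a 1-difference sequence `y₀,…,y_{n-1}`, with parameter `κ ≥ 3` and
`κ' = ⌈(2κ+2)/(κ-2)⌉`. `height a` is the height of the ladder `Lₐ` (which stores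
`FL(a, ·)` for the heights `y a + 1, …, y a + height a`). If `t = Y - y x < κ`,
then `Y` is within the range of the ladder `L_x`, so the query is answered by the
precomputed entry `L_x[Y] = FL(x,Y)`. Otherwise, with `p = ⌊t/κ⌋₂`, `xh` the
largest element of `{1,…,x}` with `pi2 xh = p` (and `xh = 0` if none exists), and
`xb` obtained from `FL(xh, y xh + (κ-2)p)` via `Valley` (with the conventions
`Jump[0] = 0` and `Valley n = n-1`), the height `Y` is within the range of the
ladder at `xb` and `FL(xb, Y) = FL(x, Y)`, so `L_{xb}[Y]` answers the query. -/
theorem stmt19 (n : ℕ) (y : ℕ → ℤ) (h1 : OneDiff n y) (hn : 1 ≤ n)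
    (κ : ℕ) (hκ : 3 ≤ κ)
    (κ' : ℤ) (hκ' : κ' = ⌈(2 * (κ : ℚ) + 2) / ((κ : ℚ) - 2)⌉)
    (ymax : ℤ) (hymax : IsGreatest {z | ∃ i < n, z = y i} ymax)
    (height : ℕ → ℤ)
    (hheight : ∀ a, a < n →
      height a = if a = 0 ∨ a = n - 1 then ymax - y a
        else min (max ((κ : ℤ) - 1) (κ' * ((Weight n y a : ℤ) - 1) - 2)) (ymax - y a))
    (x : ℕ) (hx : x < n) (Y : ℤ) (hY1 : y x < Y) (hY2 : Y ≤ ymax)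
    (t : ℤ) (ht : t = Y - y x) :
    (t < κ → Y ≤ y x + height x) ∧
    (κ ≤ t → ∀ p xh xb : ℕ,
      p = 2 ^ (Nat.log 2 (t.toNat / κ)) →
      ((xh = 0 ∧ ∀ k, 1 ≤ k → k ≤ x → pi2 k ≠ p) ∨
        (1 ≤ xh ∧ xh ≤ x ∧ pi2 xh = p ∧ ∀ k, 1 ≤ k → k ≤ x → pi2 k = p → k ≤ xh)) →
      (xh = 0 → xb = 0) →
      (1 ≤ xh → FL n y xh (y xh + ((κ : ℤ) - 2) * p) = n → xb = n - 1) →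
      (1 ≤ xh → FL n y xh (y xh + ((κ : ℤ) - 2) * p) < n →
        IsValley n y (FL n y xh (y xh + ((κ : ℤ) - 2) * p))
          (y (FL n y xh (y xh + ((κ : ℤ) - 2) * p))) xb) →
      y xb < Y ∧ Y ≤ y xb + height xb ∧ FL n y xb Y = FL n y x Y) := by
  have hκZ : (3:ℤ) ≤ (κ:ℤ) := by exact_mod_cast hκ
  constructor
  · -- Part 1
    intro htk
    rw [hheight x hx]
    by_cases hc : x = 0 ∨ x = n - 1
    · rw [if_pos hc]; linarith
    · rw [if_neg hc]
      have hκZ' : Y - y x ≤ (κ:ℤ) - 1 := by linarith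
      have hA : Y - y x ≤ max ((κ:ℤ) - 1) (κ' * ((Weight n y x : ℤ) - 1) - 2) :=
        le_trans hκZ' (le_max_left _ _)
      have hC : Y - y x ≤ ymax - y x := by linarith
      have := le_min hA hC
      linarith
  · -- Part 2
    intro htk p xh xb hp hxh hxb0 hxbn hxbv
    -- arithmetic about p and t
    have ht0 : (0:ℤ) ≤ t := by linarith
    have htn : (t.toNat : ℤ) = t := Int.toNat_of_nonneg ht0
    have hκt : κ ≤ t.toNat := by omega
    set m := t.toNat / κ with hm
    have hm1 : 1 ≤ m := (Nat.one_le_div_iff (by omega)).mpr hκt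
    have hpm : p ≤ m := hp ▸ Nat.pow_log_le_self 2 (by omega)
    have hm2p : m < 2 * p := by
      rw [hp]
      have := Nat.lt_pow_succ_log_self (by norm_num : 1 < 2) m
      rw [pow_succ] at this
      omega
    have hp1 : 1 ≤ p := hp ▸ Nat.one_le_two_pow
    have e1 : κ * p ≤ t.toNat := by
      calc κ * p ≤ κ * m := Nat.mul_le_mul_left κ hpm
        _ = m * κ := Nat.mul_comm _ _
        _ ≤ t.toNat := Nat.div_mul_le_self _ _
    have e2 : t.toNat < 2 * κ * p := by
      have h2 := Nat.div_add_mod t.toNat κ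
      rw [← hm] at h2
      have h3 : t.toNat % κ < κ := Nat.mod_lt _ (by omega)
      calc t.toNat < κ * m + κ := by omega
        _ = κ * (m + 1) := by ring
        _ ≤ κ * (2 * p) := Nat.mul_le_mul_left κ (by omega)
        _ = 2 * κ * p := by ring
    have e1Z : (κ:ℤ) * p ≤ t := by
      have := Int.ofNat_le.mpr e1; push_cast at this; linarith
    have e2Z : t ≤ 2 * (κ:ℤ) * p - 1 := by
      have := Int.ofNat_le.mpr (Nat.succ_le_of_lt e2); push_cast at this; linarith
    have hpZ : (1:ℤ) ≤ (p:ℤ) := by exact_mod_cast hp1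
    have h3p : 3 * (p:ℤ) ≤ (κ:ℤ) * p := mul_le_mul_of_nonneg_right hκZ (by linarith)
    rcases hxh with ⟨hxh0, hnok⟩ | ⟨hxh1, hxhx, hpi, hmax⟩
    · -- Case xh = 0
      have hxb : xb = 0 := hxb0 hxh0
      subst hxb
      have hxp : x < p := by
        by_contra hcx
        push_neg at hcx
        exact hnok p hp1 hcx (by rw [hp]; exact pi2_pow _)
      have hxZ : (x:ℤ) < p := by exact_mod_cast hxp
      have hy0 : y 0 ≤ y x + ((x:ℤ) - 0) := (ydiff_le n y h1 (Nat.zero_le x) hx).2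
      refine ⟨by push_cast at hy0 ⊢; linarith, ?_, ?_⟩
      · rw [hheight 0 (by omega), if_pos (Or.inl rfl)]
        linarith
      · apply FL_congr n y 0 x Y (Nat.zero_le x)
        intro i hi hi2
        have := (ydiff_le n y h1 (Nat.le_of_lt hi2) hx).2
        have hix : (i:ℤ) ≤ x := by exact_mod_cast Nat.le_of_lt hi2
        linarith
    · -- Case 1 ≤ xh
      have hxhn : xh < n := lt_of_le_of_lt hxhx hx
      set Y' := y xh + ((κ:ℤ) - 2) * p with hY'def
      set z := FL n y xh Y' with hzdef
      have hkp1 : (1:ℤ) ≤ ((κ:ℤ) - 2) * p := by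
        have : (1:ℤ) * 1 ≤ ((κ:ℤ) - 2) * p :=
          mul_le_mul (by linarith) hpZ (by norm_num) (by linarith)
        linarith
      have hyxhY' : y xh < Y' := by rw [hY'def]; linarith
      -- gap bound
      have hgap : x < xh + 2 * p := by
        by_contra hcx
        push_neg at hcx
        set L := Nat.log 2 m with hL
        have hpadd : pi2 (xh + 2 * p) = p := by
          have hpL : p = 2 ^ L := by rw [hL]; exact hp
          have h2p : xh + 2 * p = xh + 2 ^ (L + 1) := by rw [hpL, pow_succ]; ring
          rw [h2p, hpL]
          exact pi2_add xh L (by omega) (by rw [← hpL]; exact hpi)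
        have := hmax (xh + 2 * p) (by omega) hcx hpadd
        omega
      have hgapZ : (x:ℤ) < (xh:ℤ) + 2 * p := by exact_mod_cast hgap
      have hxhxZ : (xh:ℤ) ≤ x := by exact_mod_cast hxhx
      have hyd := ydiff_le n y h1 hxhx hx
      have hY'Y : Y' ≤ Y - 1 := by
        have hr : ((κ:ℤ) - 2) * p = (κ:ℤ) * p - 2 * p := by ring
        rw [hY'def]
        linarith [hyd.2]
      rcases lt_or_ge z n with hzn | hzn'
      · -- main subcase: z < n
        have hval := hxbv hxh1 hzn
        have hmemz := FL_mem n y xh Y' hzn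
        obtain ⟨hxhz, -, hY'z⟩ := hmemz
        have hwinxh : ∀ i, xh ≤ i → i < z → y i < Y' := fun i a b => FL_min n y xh Y' a b
        have hxhz' : xh < z := by
          rcases Nat.eq_or_lt_of_le hxhz with he | hlt
          · exfalso; rw [← he] at hY'z; linarith
          · exact hlt
        have hyz : y z = Y' := by
          have h4 : y (z - 1) < Y' := hwinxh (z - 1) (by omega) (by omega)
          have h5 := h1 z (by omega) hzn
          rw [abs_le] at h5
          have h6 : y z ≤ y (z - 1) + 1 := by linarith [h5.2]
          linarith
        obtain ⟨⟨hxbz, -, hyxbz, hwinz⟩, hmin, hright⟩ := hval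
        have hwinz' : ∀ i, xb ≤ i → i < z → y i < Y' := by
          intro i a b; rw [← hyz]; exact hwinz i a b
        have hyxbh : y xb ≤ y xh := by
          refine hmin xh (y xh) ⟨Nat.le_of_lt hxhz', le_refl _, by linarith, ?_⟩
          intro i hi hi2
          rw [hyz]; exact hwinxh i hi hi2
        have goal1 : y xb < Y := by linarith
        refine ⟨goal1, ?_, ?_⟩
        · -- height bound
          have hxbn2 : xb < n := lt_of_le_of_lt hxbz hzn
          rw [hheight xb hxbn2]
          by_cases hc : xb = 0 ∨ xb = n - 1
          · rw [if_pos hc]; linarith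
          · rw [if_neg hc]
            have hW := weight_ge n y h1 xb z hzn ⟨⟨hxbz, le_refl _, hyxbz, hwinz⟩, hmin, hright⟩
            rw [hyz] at hW
            set W : ℤ := (Weight n y xb : ℤ) with hWdef
            have hκQ : (0:ℚ) < (κ:ℚ) - 2 := by
              have : (3:ℚ) ≤ (κ:ℚ) := by exact_mod_cast hκ
              linarith
            have hineq : (2 * (κ:ℚ) + 2) / ((κ:ℚ) - 2) ≤ (κ' : ℚ) := by
              rw [hκ']; exact Int.le_ceil _
            have hQ : 2 * (κ:ℚ) + 2 ≤ (κ':ℚ) * ((κ:ℚ) - 2) := (div_le_iff₀ hκQ).mp hineq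
            have hZc : 2 * (κ:ℤ) + 2 ≤ κ' * ((κ:ℤ) - 2) := by exact_mod_cast hQ
            have hκ'3 : 3 ≤ κ' := by
              have h2 : (2:ℤ) < κ' := by
                rw [hκ', Int.lt_ceil]
                rw [lt_div_iff₀ hκQ]
                push_cast
                linarith
              omega
            have hZ2 : (κ:ℤ) + 4 ≤ (κ' - 1) * ((κ:ℤ) - 2) := by
              have hr : (κ' - 1) * ((κ:ℤ) - 2) = κ' * ((κ:ℤ) - 2) - ((κ:ℤ) - 2) := by ring
              linarith
            -- main chain
            have hD1 : ((κ:ℤ) - 2) * p ≤ Y' - y xb := by rw [hY'def]; linarith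
            have hDW : Y' - y xb ≤ W - 1 := by linarith
            have c1 : κ' * (Y' - y xb) ≤ κ' * (W - 1) :=
              mul_le_mul_of_nonneg_left hDW (by linarith)
            have c3 : (κ' - 1) * (((κ:ℤ) - 2) * p) ≤ (κ' - 1) * (Y' - y xb) :=
              mul_le_mul_of_nonneg_left hD1 (by linarith)
            have c5 : ((κ:ℤ) + 4) * p ≤ ((κ' - 1) * ((κ:ℤ) - 2)) * p :=
              mul_le_mul_of_nonneg_right hZ2 (by linarith)
            have c2 : κ' * (Y' - y xb) = (Y' - y xb) + (κ' - 1) * (Y' - y xb) := by ring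
            have c4 : (κ' - 1) * (((κ:ℤ) - 2) * p) = ((κ' - 1) * ((κ:ℤ) - 2)) * p := by ring
            have c6 : ((κ:ℤ) + 4) * p = (κ:ℤ) * p + 4 * p := by ring
            have hYY' : Y - Y' ≤ (κ:ℤ) * p + 4 * p - 2 := by
              have hr : ((κ:ℤ) - 2) * p = (κ:ℤ) * p - 2 * p := by ring
              rw [hY'def]
              linarith [hyd.2]
            have hB : Y - y xb ≤ κ' * (W - 1) - 2 := by linarith
            have hA2 : Y - y xb ≤ max ((κ:ℤ) - 1) (κ' * (W - 1) - 2) :=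
              le_trans hB (le_max_right _ _)
            have hC2 : Y - y xb ≤ ymax - y xb := by linarith
            have := le_min hA2 hC2
            linarith
        · -- FL equality
          rcases le_or_gt xb x with hxbx | hxbx
          · apply FL_congr n y xb x Y hxbx
            intro i hi hi2
            rcases lt_or_ge i z with hiz | hiz
            · have := hwinz' i hi hiz; linarith
            · have hd := (ydiff_le n y h1 (Nat.le_of_lt hi2) hx).2
              have hiZ : (xh:ℤ) + 1 ≤ (i:ℤ) := by
                have : xh < i := lt_of_lt_of_le hxhz' hiz
                exact_mod_cast this
              linarith
          · symm
            apply FL_congr n y x xb Y (Nat.le_of_lt hxbx)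
            intro i hi hi2
            have := hwinxh i (le_trans hxhx hi) (lt_of_lt_of_le hi2 hxbz)
            linarith
      · -- subcase z = n
        have hzn : z = n := le_antisymm (FL_le n y xh Y') hzn'
        have hxbv' : xb = n - 1 := hxbn hxh1 hzn
        subst hxbv'
        have hwin : ∀ i, xh ≤ i → i < n → y i < Y' := by
          intro i hi hi2
          exact FL_min n y xh Y' hi (by omega)
        have hy1 : y (n - 1) < Y' := hwin (n - 1) (by omega) (by omega)
        refine ⟨by linarith, ?_, ?_⟩
        · rw [hheight (n - 1) (by omega), if_pos (Or.inr rfl)]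
          linarith
        · have hfx : FL n y x Y = n := by
            apply FL_eq_n
            intro i hi hi2
            have := hwin i (le_trans hxhx hi) hi2
            linarith
          have hfn : FL n y (n - 1) Y = n := by
            apply FL_eq_n
            intro i hi hi2
            have := hwin i (by omega) hi2
            linarith
          rw [hfx, hfn]
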